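/- Let G be a finite simple chordal graph that is P_8-free, IR an irredundant set of G, A ⊆ RN = V(G) \ IR, C an irredundant component of G, and H = G[C]. Let ≤ be a tree order on C whose comparability graph is H (i.e., ≤ has a least element, every down-set {y : y ≤ x} is a chain, and two distinct vertices of C are adjacent in H if and only if they are comparable in ≤). Let x_1, …, x_p be the elements of R(A) having an element of Priv_IR(A,·) in C, let X_j = Priv_IR(A, x_j) for each j, X = X_1 ∪ … ∪ X_p, Y = (N(A) ∩ C) \ X, Z = C \ (X ∪ Y), and let F be the set of maximal elements of Z with respect to ≤. Then: there exists D ⊆ C that dominates Z in H and dominates none of X_1, …, X_p if and only if for every x ∈ F there exists a maximal element t of (C, ≤) (a leaf) with x ≤ t and X_i ⊄ N_H[t] for every i ∈ {1, …, p}. -/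

import Mathlib

variable {V : Type*}

/-- The closed neighborhood `N[x]` of a vertex. -/
def cnbr (G : SimpleGraph V) (x : V) : Set V := insert x (G.neighborSet x)

/-- `N[X] = ⋃ x ∈ X, N[x]`. -/
def cnbrSet (G : SimpleGraph V) (X : Set V) : Set V := ⋃ x ∈ X, cnbr G x

/-- `N(X) = N[X] \ X`. -/
def onbrSet (G : SimpleGraph V) (X : Set V) : Set V := cnbrSet G X \ X

/-- `D` dominates `X` if `X ⊆ N[D]`. -/
def Dominates (G : SimpleGraph V) (D X : Set V) : Prop := X ⊆ cnbrSet G D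

/-- `D` is a minimal dominating set of `G`. -/
def IsMinDomSet (G : SimpleGraph V) (D : Set V) : Prop :=
  Dominates G D Set.univ ∧ ∀ D' : Set V, D' ⊂ D → ¬ Dominates G D' Set.univ

/-- `Priv(D, x)`: private neighbors of `x` w.r.t. `D`. -/
def priv (G : SimpleGraph V) (D : Set V) (x : V) : Set V := {u | cnbr G u ∩ D = {x}}

/-- `IR` is an irredundant set of `G`. -/
def IsIrredundantSet (G : SimpleGraph V) (IR : Set V) : Prop :=
  (∀ v : V, ∃ x ∈ IR, cnbr G x ⊆ cnbr G v) ∧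
  (∀ x ∈ IR, ∀ v : V, ¬ cnbr G v ⊂ cnbr G x) ∧
  (∀ x ∈ IR, ∀ y ∈ IR, x ≠ y → cnbr G x ≠ cnbr G y)

/-- `Priv_IR(D, x) = Priv(D, x) ∩ IR`. -/
def privIR (G : SimpleGraph V) (IR D : Set V) (x : V) : Set V := priv G D x ∩ IR

/-- `A ∈ D_RN(G)`: `A` is the intersection of a minimal dominating set with `RN = V \ IR`. -/
def memDRN (G : SimpleGraph V) (IR A : Set V) : Prop :=
  ∃ D : Set V, IsMinDomSet G D ∧ A = D ∩ IRᶜ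

/-- `G` is `P_k`-free: it has no induced path on `k` vertices. -/
def PkFree (G : SimpleGraph V) (k : ℕ) : Prop :=
  ¬ ∃ f : Fin k → V, Function.Injective f ∧
      ∀ i j : Fin k, G.Adj (f i) (f j) ↔ (i.val + 1 = j.val ∨ j.val + 1 = i.val)

/-- `G` is chordal: no induced cycle on `n ≥ 4` vertices. -/
def Chordal (G : SimpleGraph V) : Prop :=
  ∀ n : ℕ, 4 ≤ n → ¬ ∃ f : ZMod n → V, Function.Injective f ∧
      ∀ i j : ZMod n, G.Adj (f i) (f j) ↔ (i = j + 1 ∨ j = i + 1)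

/-- `C` is a connected component of the subgraph of `G` induced by `S`. -/
def IsCompOf (G : SimpleGraph V) (S C : Set V) : Prop :=
  C ⊆ S ∧ C.Nonempty ∧ (G.induce C).Connected ∧
    ∀ x ∈ C, ∀ y ∈ S, G.Adj x y → y ∈ C

/-- `B(A)`: the elements of `A` having an irredundant private neighbor in some irredundant
component entirely contained in `N(A)`. -/
def Bset (G : SimpleGraph V) (IR A : Set V) : Set V :=
  {a ∈ A | ∃ C : Set V, IsCompOf G IR C ∧ C ⊆ onbrSet G A ∧ (privIR G IR A a ∩ C).Nonempty}

/-- Domination inside the subgraph induced by `C`: every `u ∈ X` equals, or is adjacent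
(within `C`) to, some `d ∈ D`.  For `D, X ⊆ C` this is domination in `G[C]`. -/
def domIn (G : SimpleGraph V) (C D X : Set V) : Prop :=
  ∀ u ∈ X, ∃ d ∈ D, u = d ∨ (G.Adj d u ∧ d ∈ C ∧ u ∈ C)

/-!
Forward: a leaf `t` above both `x ∈ F` and a vertex `d ∈ D` dominating it works, since every vertex
of `N_H[t]` lies below `t` and is therefore comparable with `d`.

Backward: let `D` be the set of leaves that lie above a vertex of `Z` and whose closed neighbourhood
contains no `Xⱼ`; it dominates `Z`. If it dominated some `Xⱼ`, then `Xⱼ` is not a chain (its top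
element would lie below a single leaf of `D`), so it contains incomparable `u, v`. With `a = xⱼ` and
vertices `x, y ∈ Z` below the leaves of `D` above `u, v`, this gives an induced path
`x - u - a - v - y`. Since irredundant vertices have pairwise incomparable closed neighbourhoods, and
every closed neighbourhood contains that of an irredundant vertex, the path extends by one vertex
beyond `y` and two beyond `x`; chordality keeps it induced, so `G` contains an induced `P₈`.
-/

lemma mem_cnbr {G : SimpleGraph V} {w z : V} : z ∈ cnbr G w ↔ z = w ∨ G.Adj w z := by
  simp [cnbr]

lemma mem_cnbr_comm {G : SimpleGraph V} {w z : V} : z ∈ cnbr G w ↔ w ∈ cnbr G z := by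
  simp only [mem_cnbr, eq_comm, G.adj_comm]

lemma Fin.eq_add_one_iff_val {n : ℕ} {a b : Fin (n + 1)} :
    a = b + 1 ↔ a.val = b.val + 1 ∨ (a.val = 0 ∧ b.val = n) := by
  rw [Fin.ext_iff, Fin.val_add_one]
  split_ifs with h <;> rw [Fin.ext_iff, Fin.val_last] at h <;> omega

def IsInducedPath (G : SimpleGraph V) {n : ℕ} (f : Fin n → V) : Prop :=
  Function.Injective f ∧ ∀ i j : Fin n, G.Adj (f i) (f j) ↔ (i.val + 1 = j.val ∨ j.val + 1 = i.val)

lemma PkFree.not_isInducedPath {G : SimpleGraph V} {k : ℕ} (hG : PkFree G k) (f : Fin k → V) :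
    ¬ IsInducedPath G f :=
  fun hf => hG ⟨f, hf⟩

lemma isInducedPath_pair {G : SimpleGraph V} {x y : V} (h : G.Adj x y) :
    IsInducedPath G ![x, y] := by
  refine ⟨fun i j hij => ?_, fun i j => ?_⟩
  · fin_cases i <;> fin_cases j <;> simp_all [h.ne, h.ne']
  · fin_cases i <;> fin_cases j <;> simp [h, h.symm]

lemma IsInducedPath.init {G : SimpleGraph V} {n : ℕ} {f : Fin (n + 1) → V}
    (hf : IsInducedPath G f) : IsInducedPath G (Fin.init f) :=
  ⟨hf.1.comp (Fin.castSucc_injective n), fun i j => hf.2 i.castSucc j.castSucc⟩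

lemma IsInducedPath.eq_one_of_adj_zero {G : SimpleGraph V} {n : ℕ} {f : Fin (n + 2) → V}
    (hf : IsInducedPath G f) {i : Fin (n + 2)} (h : G.Adj (f i) (f 0)) : i = 1 := by
  rw [hf.2, Fin.val_zero] at h
  exact Fin.ext (by rw [Fin.val_one]; omega)

theorem Chordal.false_of_cycle {G : SimpleGraph V} (hG : Chordal G) {k : ℕ} (hk : 3 ≤ k)
    (g : Fin (k + 1) → V) (hg : Function.Injective g)
    (hadj : ∀ i j, G.Adj (g i) (g j) ↔ i = j + 1 ∨ j = i + 1) : False :=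
  hG (k + 1) (by omega) ⟨g, hg, hadj⟩

lemma Chordal.not_adj_last {G : SimpleGraph V} (hG : Chordal G) {n : ℕ} {f : Fin (n + 3) → V}
    (hf : IsInducedPath G f) {w : V} (hw : w ∉ Set.range f) (hw0 : G.Adj w (f 0))
    (hmid : ∀ i : Fin (n + 3), 0 < i.val → i.val < n + 2 → ¬ G.Adj w (f i)) :
    ¬ G.Adj w (f (Fin.last _)) := by
  intro hlast
  have hwf : ∀ i : Fin (n + 3), G.Adj w (f i) ↔ i.val = 0 ∨ i.val = n + 2 := by
    intro i
    refine ⟨fun h => ?_, ?_⟩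
    · by_contra hne
      exact hmid i (by omega) (by omega) h
    · rintro (h | h)
      · rwa [show i = 0 from Fin.ext h]
      · rwa [show i = Fin.last _ from Fin.ext h]
  have hfw : ∀ i : Fin (n + 3), G.Adj (f i) w ↔ i.val = 0 ∨ i.val = n + 2 := fun i =>
    (G.adj_comm _ _).trans (hwf i)
  refine hG.false_of_cycle (k := n + 3) (by omega) (Fin.cons w f)
    (Fin.cons_injective_iff.2 ⟨hw, hf.1⟩) fun i j => ?_
  refine Fin.cases ?_ (fun i => ?_) i <;> refine Fin.cases ?_ (fun j => ?_) j <;>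
    simp only [Fin.cons_zero, Fin.cons_succ, Fin.eq_add_one_iff_val, Fin.val_zero, Fin.val_succ,
      hwf, hfw, hf.2, SimpleGraph.irrefl, true_and]
  all_goals first | (constructor <;> intro <;> omega) | simp

lemma IsInducedPath.not_mem_range {G : SimpleGraph V} {n : ℕ} {f : Fin (n + 2) → V}
    (hf : IsInducedPath G f) {w : V} (hw0 : G.Adj w (f 0)) (hw1 : f 1 ≠ w) :
    w ∉ Set.range f := by
  rintro ⟨i, rfl⟩
  exact hw1 (congrArg f (hf.eq_one_of_adj_zero hw0)).symm

/-- The first neighbour of `w` beyond `f 0` would close an induced cycle of length at least four. -/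
theorem Chordal.not_mem_cnbr_of_isInducedPath {G : SimpleGraph V} (hG : Chordal G) {w : V} :
    ∀ {n : ℕ} {f : Fin (n + 2) → V}, IsInducedPath G f → G.Adj w (f 0) → f 1 ∉ cnbr G w →
      ∀ i : Fin (n + 2), 0 < i.val → f i ∉ cnbr G w
  | 0, f, _, _, hw1, i, hi => by
    rwa [show i = 1 from Fin.ext (by rw [Fin.val_one]; omega)]
  | n + 1, f, hf, hw0, hw1, i, hi => by
    have hinit := hG.not_mem_cnbr_of_isInducedPath hf.init hw0 hw1
    have hw : w ∉ Set.range f := hf.not_mem_range hw0 fun h => hw1 (h ▸ mem_cnbr.2 (Or.inl rfl))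
    rcases Nat.lt_or_ge i.val (n + 2) with hlt | hge
    · exact hinit ⟨i, hlt⟩ hi
    obtain rfl : i = Fin.last _ := Fin.ext (by rw [Fin.val_last]; omega)
    rw [mem_cnbr, not_or]
    refine ⟨fun h => hw ⟨_, h⟩, hG.not_adj_last hf hw hw0 fun j hj0 hj h => ?_⟩
    exact hinit ⟨j, hj⟩ hj0 (mem_cnbr.2 (Or.inr h))

theorem Chordal.isInducedPath_cons {G : SimpleGraph V} (hG : Chordal G) {n : ℕ}
    {f : Fin (n + 2) → V} (hf : IsInducedPath G f) {w : V} (hw0 : G.Adj w (f 0))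
    (hw1 : f 1 ∉ cnbr G w) : IsInducedPath G (Fin.cons w f : Fin (n + 3) → V) := by
  have hwf : ∀ i : Fin (n + 2), G.Adj w (f i) ↔ i.val = 0 := by
    intro i
    refine ⟨fun h => ?_, fun h => by rwa [show i = 0 from Fin.ext h]⟩
    by_contra hi
    exact hG.not_mem_cnbr_of_isInducedPath hf hw0 hw1 i (by omega) (mem_cnbr.2 (Or.inr h))
  have hfw : ∀ i : Fin (n + 2), G.Adj (f i) w ↔ i.val = 0 := fun i =>
    (G.adj_comm _ _).trans (hwf i)
  have hw : w ∉ Set.range f := hf.not_mem_range hw0 fun h => hw1 (h ▸ mem_cnbr.2 (Or.inl rfl))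
  refine ⟨Fin.cons_injective_iff.2 ⟨hw, hf.1⟩, fun i j => ?_⟩
  refine Fin.cases ?_ (fun i => ?_) i <;> refine Fin.cases ?_ (fun j => ?_) j <;>
    simp only [Fin.cons_zero, Fin.cons_succ, Fin.val_zero, Fin.val_succ, hwf, hfw, hf.2,
      SimpleGraph.irrefl]
  all_goals first | (constructor <;> intro <;> omega) | simp

lemma IsIrredundantSet.exists_adj_not_mem_cnbr {G : SimpleGraph V} {IR : Set V}
    (hIR : IsIrredundantSet G IR) {x y : V} (hx : x ∈ IR) (hy : y ∈ IR) (hxy : G.Adj x y) :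
    ∃ q, G.Adj q y ∧ x ∉ cnbr G q := by
  have hsub : ¬ cnbr G y ⊆ cnbr G x := fun h =>
    hIR.2.1 x hx y (ssubset_of_subset_of_ne h (hIR.2.2 y hy x hx hxy.ne'))
  obtain ⟨q, hqy, hqx⟩ := Set.not_subset.1 hsub
  rcases mem_cnbr.1 hqy with rfl | hyq
  · exact absurd (mem_cnbr.2 (Or.inr hxy)) hqx
  · exact ⟨q, hyq.symm, fun h => hqx (mem_cnbr_comm.1 h)⟩

lemma IsIrredundantSet.exists_adj_adj_not_mem_cnbr {G : SimpleGraph V} {IR : Set V}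
    (hIR : IsIrredundantSet G IR) {x u : V} (hx : x ∈ IR) (hu : u ∈ IR) (hxu : G.Adj x u) :
    ∃ w p, G.Adj w x ∧ u ∉ cnbr G w ∧ G.Adj p w ∧ x ∉ cnbr G p := by
  obtain ⟨w, hwx, huw⟩ := hIR.exists_adj_not_mem_cnbr hu hx hxu.symm
  by_cases hw : w ∈ IR
  · obtain ⟨p, hpw, hxp⟩ := hIR.exists_adj_not_mem_cnbr hx hw hwx.symm
    exact ⟨w, p, hwx, huw, hpw, hxp⟩
  -- `w` is redundant, so some `i ∈ IR` has `N[i] ⊆ N[w]`; either `i` or `w` carries the path on.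
  obtain ⟨i, hi, hiw⟩ := hIR.1 w
  have hwi : G.Adj w i := (mem_cnbr.1 (hiw (mem_cnbr.2 (Or.inl rfl)))).resolve_left
    fun h => hw (h ▸ hi)
  have hui : u ∉ cnbr G i := fun h => huw (hiw h)
  by_cases hxi : x ∈ cnbr G i
  · have hix : G.Adj i x := (mem_cnbr.1 hxi).resolve_left
      fun h => hui (h ▸ mem_cnbr.2 (Or.inr hxu))
    obtain ⟨p, hpi, hxp⟩ := hIR.exists_adj_not_mem_cnbr hx hi hix.symm
    exact ⟨i, p, hix, hui, hpi, hxp⟩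
  · exact ⟨w, i, hwx, huw, hwi.symm, hxi⟩

theorem IsIrredundantSet.false_of_path {G : SimpleGraph V} {IR : Set V}
    (hIR : IsIrredundantSet G IR) (hG : Chordal G) (hP8 : PkFree G 8) {x u a v y : V}
    (hx : x ∈ IR) (hu : u ∈ IR) (hv : v ∈ IR) (hy : y ∈ IR)
    (hxu : G.Adj x u) (hua : G.Adj u a) (hav : G.Adj a v) (hvy : G.Adj v y)
    (hax : a ∉ cnbr G x) (hvu : v ∉ cnbr G u) (hya : y ∉ cnbr G a) : False := by
  obtain ⟨q, hqy, hvq⟩ := hIR.exists_adj_not_mem_cnbr hv hy hvy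
  obtain ⟨w, p, hwx, huw, hpw, hxp⟩ := hIR.exists_adj_adj_not_mem_cnbr hx hu hxu
  have h2 := isInducedPath_pair hqy.symm
  have h3 := hG.isInducedPath_cons h2 hvy (mem_cnbr_comm.not.1 hvq)
  have h4 := hG.isInducedPath_cons h3 hav hya
  have h5 := hG.isInducedPath_cons h4 hua hvu
  have h6 := hG.isInducedPath_cons h5 hxu hax
  have h7 := hG.isInducedPath_cons h6 hwx huw
  exact hP8.not_isInducedPath _ (hG.isInducedPath_cons h7 hpw hxp)

lemma adj_of_mem_privIR {G : SimpleGraph V} {IR A : Set V} (hA : A ⊆ IRᶜ) {a s : V}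
    (hs : s ∈ privIR G IR A a) : G.Adj s a := by
  have ha : a ∈ cnbr G s ∩ A := hs.1.symm ▸ rfl
  exact (mem_cnbr.1 ha.1).resolve_left fun h => hA ha.2 (h ▸ hs.2)

structure IsForestOrderOn (C : Set V) (le : V → V → Prop) : Prop where
  refl : ∀ x ∈ C, le x x
  antisymm : ∀ x ∈ C, ∀ y ∈ C, le x y → le y x → x = y
  trans : ∀ x ∈ C, ∀ y ∈ C, ∀ z ∈ C, le x y → le y z → le x z
  chain_le : ∀ x ∈ C, ∀ y ∈ C, ∀ z ∈ C, le y x → le z x → le y z ∨ le z y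

def IsComparabilityGraphOn (G : SimpleGraph V) (C : Set V) (le : V → V → Prop) : Prop :=
  ∀ x ∈ C, ∀ y ∈ C, G.Adj x y ↔ x ≠ y ∧ (le x y ∨ le y x)

def IsMaxIn (le : V → V → Prop) (P : Set V) (t : V) : Prop :=
  t ∈ P ∧ ∀ y ∈ P, le t y → y = t

/-- The closed neighbourhood `N_H[t]` of `t` in `H = G[C]`. -/
def cnbrIn (G : SimpleGraph V) (C : Set V) (t : V) : Set V :=
  {y | y ∈ C ∧ (y = t ∨ G.Adj t y)}

lemma domIn_iff {G : SimpleGraph V} {C D X : Set V} (hDC : D ⊆ C) :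
    domIn G C D X ↔ ∀ u ∈ X, ∃ d ∈ D, u ∈ cnbrIn G C d := by
  refine forall₂_congr fun u _ => exists_congr fun d => and_congr_right fun hd => ?_
  constructor
  · rintro (rfl | ⟨h, -, hu⟩)
    exacts [⟨hDC hd, Or.inl rfl⟩, ⟨hu, Or.inr h⟩]
  · rintro ⟨hu, rfl | h⟩
    exacts [Or.inl rfl, Or.inr ⟨h, hDC hd, hu⟩]

namespace IsForestOrderOn

variable {G : SimpleGraph V} {C : Set V} {le : V → V → Prop}

theorem exists_isMaxIn_ge (hT : IsForestOrderOn C le) {P : Set V} (hPC : P ⊆ C)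
    (hP : P.Finite) {z : V} (hz : z ∈ P) : ∃ t, IsMaxIn le P t ∧ le z t := by
  obtain ⟨t, ⟨htP, hzt⟩, hmax⟩ := (hP.subset (Set.sep_subset _ _)).exists_maximalFor
    (fun t => {w ∈ C | le w t}) _ ⟨z, hz, hT.refl z (hPC hz)⟩
  refine ⟨t, ⟨htP, fun y hy hty => ?_⟩, hzt⟩
  have hsub : {w ∈ C | le w t} ⊆ {w ∈ C | le w y} := fun w hw =>
    ⟨hw.1, hT.trans w hw.1 t (hPC htP) y (hPC hy) hw.2 hty⟩
  have hyt : le y t := (hmax ⟨hy, hT.trans z (hPC hz) t (hPC htP) y (hPC hy) hzt hty⟩ hsub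
    ⟨hPC hy, hT.refl y (hPC hy)⟩).2
  exact hT.antisymm y (hPC hy) t (hPC htP) hyt hty

variable (hT : IsForestOrderOn C le) (hcomp : IsComparabilityGraphOn G C le)
include hT hcomp

theorem le_of_mem_cnbrIn {t s : V} (ht : IsMaxIn le C t) (hs : s ∈ cnbrIn G C t) : le s t := by
  obtain ⟨hsC, rfl | hts⟩ := hs
  · exact hT.refl s hsC
  rcases ((hcomp t ht.1 s hsC).1 hts).2 with h | h
  · exact ht.2 s hsC h ▸ hT.refl t ht.1
  · exact h

theorem mem_cnbrIn_of_le_of_le {s d t : V} (hs : s ∈ C) (hd : d ∈ C) (ht : t ∈ C)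
    (hst : le s t) (hdt : le d t) : s ∈ cnbrIn G C d := by
  refine ⟨hs, or_iff_not_imp_left.2 fun hsd => (hcomp d hd s hs).2 ⟨Ne.symm hsd, ?_⟩⟩
  exact hT.chain_le t ht d hd s hs hdt hst

theorem exists_isMaxIn_forall_domIn (hC : C.Finite) {D : Set V} (hDC : D ⊆ C) {x : V}
    (hx : ∃ d ∈ D, x ∈ cnbrIn G C d) :
    ∃ t, IsMaxIn le C t ∧ le x t ∧ ∀ S ⊆ cnbrIn G C t, domIn G C D S := by
  obtain ⟨d, hdD, hxC, hxd⟩ := hx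
  have hdC := hDC hdD
  obtain ⟨m, hmC, hxm, hdm⟩ : ∃ m ∈ C, le x m ∧ le d m := by
    rcases hxd with rfl | hdx
    · exact ⟨x, hxC, hT.refl x hxC, hT.refl x hxC⟩
    rcases ((hcomp d hdC x hxC).1 hdx).2 with h | h
    exacts [⟨x, hxC, hT.refl x hxC, h⟩, ⟨d, hdC, h, hT.refl d hdC⟩]
  obtain ⟨t, ht, hmt⟩ := hT.exists_isMaxIn_ge subset_rfl hC hmC
  refine ⟨t, ht, hT.trans x hxC m hmC t ht.1 hxm hmt, fun S hS => (domIn_iff hDC).2 ?_⟩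
  intro s hs
  exact ⟨d, hdD, hT.mem_cnbrIn_of_le_of_le hcomp (hS hs).1 hdC ht.1
    (hT.le_of_mem_cnbrIn hcomp ht (hS hs)) (hT.trans d hdC m hmC t ht.1 hdm hmt)⟩

theorem exists_mem_subset_cnbrIn_of_chain (hC : C.Finite) {D S : Set V}
    (hD : ∀ t ∈ D, IsMaxIn le C t) (hSC : S ⊆ C) (hS : S.Nonempty)
    (hchain : ∀ s ∈ S, ∀ s' ∈ S, le s s' ∨ le s' s) (hdom : ∀ s ∈ S, ∃ t ∈ D, le s t) :
    ∃ t ∈ D, S ⊆ cnbrIn G C t := by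
  obtain ⟨s₀, hs₀⟩ := hS
  obtain ⟨m, hm, -⟩ := hT.exists_isMaxIn_ge hSC (hC.subset hSC) hs₀
  obtain ⟨t, htD, hmt⟩ := hdom m hm.1
  have htC := (hD t htD).1
  refine ⟨t, htD, fun s hs => hT.mem_cnbrIn_of_le_of_le hcomp (hSC hs) htC htC ?_ (hT.refl t htC)⟩
  rcases hchain s hs m hm.1 with h | h
  · exact hT.trans s (hSC hs) m (hSC hm.1) t htC h hmt
  · exact hm.2 s hs h ▸ hmt

theorem not_domIn_of_forall_isMaxIn {IR : Set V} (hIR : IsIrredundantSet G IR)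
    (hch : Chordal G) (hP8 : PkFree G 8) (hCIR : C ⊆ IR) (hC : C.Finite) {S : Set V}
    (hS : S.Nonempty) {a : V} (hSa : ∀ s ∈ S, G.Adj s a) {D : Set V}
    (hD : ∀ t ∈ D, IsMaxIn le C t ∧ ¬ S ⊆ cnbrIn G C t ∧ ∃ z ∈ C, le z t ∧ a ∉ cnbr G z) :
    ¬ domIn G C D S := by
  intro hdom
  rw [domIn_iff fun t ht => (hD t ht).1.1] at hdom
  have hSC : S ⊆ C := fun s hs => by
    obtain ⟨t, -, hst⟩ := hdom s hs
    exact hst.1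
  have hle : ∀ s ∈ S, ∃ t ∈ D, le s t := fun s hs => by
    obtain ⟨t, htD, hst⟩ := hdom s hs
    exact ⟨t, htD, hT.le_of_mem_cnbrIn hcomp (hD t htD).1 hst⟩
  by_cases hchain : ∀ s ∈ S, ∀ s' ∈ S, le s s' ∨ le s' s
  · obtain ⟨t, htD, hSt⟩ := hT.exists_mem_subset_cnbrIn_of_chain hcomp hC (fun t ht => (hD t ht).1)
      hSC hS hchain hle
    exact (hD t htD).2.1 hSt
  push Not at hchain
  obtain ⟨u, hu, v, hv, huv, hvu⟩ := hchain
  have hend : ∀ s ∈ S, ∃ z ∈ C, G.Adj z s ∧ a ∉ cnbr G z := by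
    intro s hs
    obtain ⟨t, htD, hst⟩ := hle s hs
    obtain ⟨ht, -, z, hzC, hzt, hza⟩ := hD t htD
    refine ⟨z, hzC, ?_, hza⟩
    obtain ⟨-, rfl | h⟩ := hT.mem_cnbrIn_of_le_of_le hcomp hzC (hSC hs) ht.1 hzt hst
    · exact absurd (mem_cnbr.2 (Or.inr (hSa z hs))) hza
    · exact h.symm
  obtain ⟨x, hxC, hxu, hax⟩ := hend u hu
  obtain ⟨y, hyC, hyv, hay⟩ := hend v hv
  have hvu' : v ∉ cnbr G u := by
    rintro (rfl | h)
    · exact huv (hT.refl v (hSC hv))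
    · rcases ((hcomp u (hSC hu) v (hSC hv)).1 h).2 with h | h
      exacts [huv h, hvu h]
  exact hIR.false_of_path hch hP8 (hCIR hxC) (hCIR (hSC hu)) (hCIR (hSC hv)) (hCIR hyC) hxu
    (hSa u hu) (hSa v hv).symm hyv.symm hax hvu' (mem_cnbr_comm.not.1 hay)

end IsForestOrderOn

theorem stmt_14_general [Fintype V] (G : SimpleGraph V) (hch : Chordal G) (hP8 : PkFree G 8)
    (IR : Set V) (hIR : IsIrredundantSet G IR)
    (A : Set V) (hA : A ⊆ IRᶜ)
    (C : Set V) (hC : IsCompOf G IR C)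
    (le : V → V → Prop)
    (hrefl : ∀ x ∈ C, le x x)
    (hanti : ∀ x ∈ C, ∀ y ∈ C, le x y → le y x → x = y)
    (htrans : ∀ x ∈ C, ∀ y ∈ C, ∀ z ∈ C, le x y → le y z → le x z)
    (hchain : ∀ x ∈ C, ∀ y ∈ C, ∀ z ∈ C, le y x → le z x → (le y z ∨ le z y))
    (hcompat : ∀ x ∈ C, ∀ y ∈ C, (G.Adj x y ↔ x ≠ y ∧ (le x y ∨ le y x)))
    (p : ℕ) (xs : Fin p → V)
    (hxsmem : ∀ j, xs j ∈ A \ Bset G IR A ∧ (privIR G IR A (xs j) ∩ C).Nonempty)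
    (X Y Z F : Set V)
    (hY : Y = (onbrSet G A ∩ C) \ X)
    (hZ : Z = C \ (X ∪ Y))
    (hF : F = {x ∈ Z | ∀ y ∈ Z, le x y → y = x}) :
    (∃ D ⊆ C, domIn G C D Z ∧ ∀ j : Fin p, ¬ domIn G C D (privIR G IR A (xs j))) ↔
      (∀ x ∈ F, ∃ t ∈ C, (∀ y ∈ C, le t y → y = t) ∧ le x t ∧
        ∀ j : Fin p,
          ¬ privIR G IR A (xs j) ⊆ {y | y ∈ C ∧ (y = t ∨ G.Adj t y)}) := by
  have hT : IsForestOrderOn C le := ⟨hrefl, hanti, htrans, hchain⟩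
  have hCf : C.Finite := Set.toFinite C
  have hZC : Z ⊆ C := hZ ▸ Set.sdiff_subset
  have hZA : ∀ z ∈ Z, ∀ b ∈ A, b ∉ cnbr G z := by
    subst hZ hY
    rintro z ⟨hzC, hzXY⟩ b hb hbz
    have hzN : z ∈ onbrSet G A :=
      ⟨Set.mem_biUnion hb (mem_cnbr_comm.1 hbz), fun hzA => hA hzA (hC.1 hzC)⟩
    by_cases hzX : z ∈ X
    exacts [hzXY (Or.inl hzX), hzXY (Or.inr ⟨⟨hzN, hzC⟩, hzX⟩)]
  subst hF
  constructor
  · rintro ⟨D, hDC, hDZ, hDX⟩ x hx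
    obtain ⟨t, ht, hxt, hdom⟩ :=
      hT.exists_isMaxIn_forall_domIn hcompat hCf hDC ((domIn_iff hDC).1 hDZ x hx.1)
    exact ⟨t, ht.1, ht.2, hxt, fun j hj => hDX j (hdom _ hj)⟩
  intro hleaf
  refine ⟨{t | IsMaxIn le C t ∧ (∃ z ∈ Z, le z t) ∧ ∀ j, ¬ privIR G IR A (xs j) ⊆ cnbrIn G C t},
    fun t ht => ht.1.1, (domIn_iff fun t ht => ht.1.1).2 fun z hz => ?_, fun j => ?_⟩
  · obtain ⟨f, hf, hzf⟩ := hT.exists_isMaxIn_ge hZC (hCf.subset hZC) hz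
    obtain ⟨t, htC, htmax, hft, hgood⟩ := hleaf f hf
    have hzt := htrans z (hZC hz) f (hZC hf.1) t htC hzf hft
    exact ⟨t, ⟨⟨htC, htmax⟩, ⟨f, hf.1, hft⟩, hgood⟩,
      hT.mem_cnbrIn_of_le_of_le hcompat (hZC hz) htC htC hzt (hrefl t htC)⟩
  obtain ⟨⟨ha, -⟩, s, hs, -⟩ := hxsmem j
  refine hT.not_domIn_of_forall_isMaxIn hcompat hIR hch hP8 hC.1 hCf ⟨s, hs⟩
    (fun s hs => adj_of_mem_privIR hA hs) fun t ⟨ht, ⟨z, hz, hzt⟩, hgood⟩ => ?_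
  exact ⟨ht, hgood j, z, hZC hz, hzt, hZA z hz _ ha⟩

/-- In a `P₈`-free chordal graph with `C` an irredundant component whose
induced subgraph `H = G[C]` is the comparability graph of a tree order `le`, there exists
`D ⊆ C` dominating `Z` in `H` and dominating none of `X₁, …, X_p` iff every `x ∈ F` has a
leaf `t` above it with `Xᵢ ⊄ N_H[t]` for every `i`. -/
theorem stmt_14 [Fintype V] (G : SimpleGraph V) (hch : Chordal G) (hP8 : PkFree G 8)
    (IR : Set V) (hIR : IsIrredundantSet G IR)
    (A : Set V) (hA : A ⊆ IRᶜ)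
    (C : Set V) (hC : IsCompOf G IR C)
    (le : V → V → Prop)
    (hrefl : ∀ x ∈ C, le x x)
    (hanti : ∀ x ∈ C, ∀ y ∈ C, le x y → le y x → x = y)
    (htrans : ∀ x ∈ C, ∀ y ∈ C, ∀ z ∈ C, le x y → le y z → le x z)
    (hbot : ∃ r ∈ C, ∀ x ∈ C, le r x)
    (hchain : ∀ x ∈ C, ∀ y ∈ C, ∀ z ∈ C, le y x → le z x → (le y z ∨ le z y))
    (hcompat : ∀ x ∈ C, ∀ y ∈ C, (G.Adj x y ↔ x ≠ y ∧ (le x y ∨ le y x)))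
    (p : ℕ) (xs : Fin p → V) (hxsinj : Function.Injective xs)
    (hxsmem : ∀ j, xs j ∈ A \ Bset G IR A ∧ (privIR G IR A (xs j) ∩ C).Nonempty)
    (hxsall : ∀ a ∈ A \ Bset G IR A, (privIR G IR A a ∩ C).Nonempty → ∃ j, xs j = a)
    (X Y Z F : Set V)
    (hX : X = ⋃ j : Fin p, privIR G IR A (xs j))
    (hY : Y = (onbrSet G A ∩ C) \ X)
    (hZ : Z = C \ (X ∪ Y))
    (hF : F = {x ∈ Z | ∀ y ∈ Z, le x y → y = x}) :
    (∃ D ⊆ C, domIn G C D Z ∧ ∀ j : Fin p, ¬ domIn G C D (privIR G IR A (xs j))) ↔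
      (∀ x ∈ F, ∃ t ∈ C, (∀ y ∈ C, le t y → y = t) ∧ le x t ∧
        ∀ j : Fin p,
          ¬ privIR G IR A (xs j) ⊆ {y | y ∈ C ∧ (y = t ∨ G.Adj t y)}) :=
  stmt_14_general G hch hP8 IR hIR A hA C hC le hrefl hanti htrans hchain hcompat p xs hxsmem X Y Z
    F hY hZ hF
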